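/- Let A be a 2n×2n real positive definite matrix and M ∈ Sp(2n,2n,A). Then the Frobenius norm of M satisfies ‖M‖_F² ≤ 2n·κ(A), where κ(A) = ‖A‖·‖A⁻¹‖ is the condition number of A with respect to the operator norm. -/

import Mathlib

open Filter Matrix Topology
open scoped Classical

/-- The space of `2n × 2n` real matrices, indexed by `Fin n ⊕ Fin n`. -/
abbrev Mat (n : ℕ) := Matrix (Fin n ⊕ Fin n) (Fin n ⊕ Fin n) ℝ

/-- `2n × 2m` real matrices. -/
abbrev MatR (n m : ℕ) := Matrix (Fin n ⊕ Fin n) (Fin m ⊕ Fin m) ℝ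

/-- The standard symplectic form matrix `J = [[0, I], [-I, 0]]`. -/
def symplJ (n : ℕ) : Mat n := Matrix.fromBlocks 0 1 (-1) 0

/-- The increasingly sorted symplectic eigenvalues of `A` (0-based indexing), defined via
Williamson's theorem: `d : Fin n → ℝ` is the unique monotone positive tuple such that
`MᵀAM = diag d ⊕ diag d` for some symplectic `M` (which exists whenever `A` is positive
definite). -/
noncomputable def symplEig {n : ℕ} (A : Mat n) : Fin n → ℝ :=
  if h : ∃ d : Fin n → ℝ, Monotone d ∧ (∀ i, 0 < d i) ∧
      ∃ M : Mat n, Mᵀ * symplJ n * M = symplJ n ∧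
        Mᵀ * A * M = Matrix.fromBlocks (Matrix.diagonal d) 0 0 (Matrix.diagonal d)
  then h.choose else fun _ => 0

/-- `sEig A j` is the `j`-th symplectic eigenvalue `d_j(A)`, with 1-based index `j`. -/
noncomputable def sEig {n : ℕ} (A : Mat n) (j : ℕ) : ℝ :=
  if h : j - 1 < n then symplEig A ⟨j - 1, h⟩ else 0

/-- `i_m`: the number of indices `k ≤ m` (1-based) with `d_k(A) = d_m(A)`. -/
noncomputable def iIdx {n : ℕ} (A : Mat n) (m : ℕ) : ℕ :=
  ((Finset.Icc 1 n).filter fun k => k ≤ m ∧ sEig A k = sEig A m).card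

/-- `j_m`: the number of indices `k > m` (1-based) with `d_k(A) = d_m(A)`. -/
noncomputable def jIdx {n : ℕ} (A : Mat n) (m : ℕ) : ℕ :=
  ((Finset.Icc 1 n).filter fun k => m < k ∧ sEig A k = sEig A m).card

/-- Membership in `Sp(2n, 2m)`: the columns form a symplectically orthonormal set,
equivalently `Sᵀ J_{2n} S = J_{2m}`. -/
def InSp (n m : ℕ) (S : MatR n m) : Prop := Sᵀ * symplJ n * S = symplJ m

/-- Membership in `Sp(2n, 2m, A)`: additionally the `j`-th column pair `(u_j, v_j)` is a pair of
symplectic eigenvectors of `A` for the symplectic eigenvalue `d_j(A)`. -/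
def InSpA (n m : ℕ) (A : Mat n) (S : MatR n m) : Prop :=
  InSp n m S ∧ ∀ j : Fin m,
    A *ᵥ (fun i => S i (Sum.inl j)) = sEig A (j + 1) • (symplJ n *ᵥ fun i => S i (Sum.inr j)) ∧
    A *ᵥ (fun i => S i (Sum.inr j)) = (-sEig A (j + 1)) • (symplJ n *ᵥ fun i => S i (Sum.inl j))

/-- The inner product `⟨X, Y⟩ = tr (X Y)` on matrices. -/
noncomputable def minner {α : Type*} [Fintype α] (X Y : Matrix α α ℝ) : ℝ := (X * Y).trace

/-- `σ_m : S(2n) → (-∞, ∞]`, equal to `-2 (d_1(P) + ⋯ + d_m(P))` on positive definite `P`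
and `∞` elsewhere. -/
noncomputable def sigmaE {n : ℕ} (m : ℕ) (P : Mat n) : EReal :=
  if P.PosDef then (((-2) * ∑ j ∈ Finset.Icc 1 m, sEig P j : ℝ) : EReal) else ⊤

/-- The real-valued version of `σ_m`, i.e. `-2 (d_1(P) + ⋯ + d_m(P))`. -/
noncomputable def sigmaR {n : ℕ} (m : ℕ) (P : Mat n) : ℝ :=
  (-2) * ∑ j ∈ Finset.Icc 1 m, sEig P j

/-- The Fenchel subdifferential of `σ_m` at `A`, within the space `S(2n)` of symmetric
matrices. -/
noncomputable def sigmaSub {n : ℕ} (m : ℕ) (A : Mat n) : Set (Mat n) :=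
  {X | X.IsSymm ∧ ∀ H : Mat n, H.IsSymm →
    ((minner X (H - A) : ℝ) : EReal) ≤ sigmaE m H - sigmaE m A}

/-- `λ_k↓(C)`: the `k`-th largest eigenvalue (1-based) of the Hermitian matrix `C`. -/
noncomputable def kthLargestEig {ι : Type*} [Fintype ι] [DecidableEq ι]
    (C : Matrix ι ι ℂ) (k : ℕ) : ℝ :=
  if h : C.IsHermitian then
    ((Finset.univ.val.map h.eigenvalues).sort (· ≤ ·)).getD (Fintype.card ι - k) 0
  else 0

/-- The index set for `M̃`: indices whose symplectic eigenvalue equals `d_m(A)`. -/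
abbrev tilIdx {n : ℕ} (A : Mat n) (m : ℕ) := {k : Fin n // symplEig A k = sEig A m}

/-- The index set for `M̄`: indices whose symplectic eigenvalue is `< d_m(A)`. -/
abbrev barIdx {n : ℕ} (A : Mat n) (m : ℕ) := {k : Fin n // symplEig A k < sEig A m}

/-- `M̃`: the submatrix of `M` consisting of the column pairs `(u_k, v_k)` with
`d_k(A) = d_m(A)`. -/
noncomputable def Mtil {n : ℕ} (A : Mat n) (m : ℕ) (M : Mat n) :
    Matrix (Fin n ⊕ Fin n) (tilIdx A m ⊕ tilIdx A m) ℝ :=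
  M.submatrix id (Sum.map Subtype.val Subtype.val)

/-- `M̄`: the submatrix of `M` consisting of the column pairs `(u_k, v_k)` with
`d_k(A) < d_m(A)`. -/
noncomputable def Mbar {n : ℕ} (A : Mat n) (m : ℕ) (M : Mat n) :
    Matrix (Fin n ⊕ Fin n) (barIdx A m ⊕ barIdx A m) ℝ :=
  M.submatrix id (Sum.map Subtype.val Subtype.val)

/-- `B̄ = -M̄ᵀ B M̄`. -/
noncomputable def Bbar {n : ℕ} (A : Mat n) (m : ℕ) (M B : Mat n) :
    Matrix (barIdx A m ⊕ barIdx A m) (barIdx A m ⊕ barIdx A m) ℝ :=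
  -((Mbar A m M)ᵀ * B * Mbar A m M)

/-- `B̃ = -M̃ᵀ B M̃`. -/
noncomputable def Btil {n : ℕ} (A : Mat n) (m : ℕ) (M B : Mat n) :
    Matrix (tilIdx A m ⊕ tilIdx A m) (tilIdx A m ⊕ tilIdx A m) ℝ :=
  -((Mtil A m M)ᵀ * B * Mtil A m M)

/-- `B̃̃ = B̃₁₁ + B̃₂₂ + i (B̃₁₂ - B̃₁₂ᵀ)`, a Hermitian matrix. -/
noncomputable def Btiltil {n : ℕ} (A : Mat n) (m : ℕ) (M B : Mat n) :
    Matrix (tilIdx A m) (tilIdx A m) ℂ :=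
  fun p q =>
    ((Btil A m M B (Sum.inl p) (Sum.inl q) + Btil A m M B (Sum.inr p) (Sum.inr q) : ℝ) : ℂ) +
      Complex.I *
        ((Btil A m M B (Sum.inl p) (Sum.inr q) - Btil A m M B (Sum.inl q) (Sum.inr p) : ℝ) : ℂ)

/-- The directional derivative `d_m′(A; B)` of the `m`-th symplectic eigenvalue (1-based `m`). -/
noncomputable def dDeriv {n : ℕ} (A B : Mat n) (m : ℕ) : ℝ :=
  limUnder (𝓝[>] (0 : ℝ)) (fun t => (sEig (A + t • B) m - sEig A m) / t)

/-- `m̂`: the smallest 1-based index `j` with `d_j(A) = d_m(A)`. -/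
noncomputable def mhat {n : ℕ} (A : Mat n) (m : ℕ) : ℕ :=
  sInf {j : ℕ | 1 ≤ j ∧ sEig A j = sEig A m}

/-- The Clarke directional derivative `f°(A; B)` of `f` at `A` in direction `B`, where the
base point varies in the space of symmetric matrices. -/
noncomputable def clarkeD {n : ℕ} (f : Mat n → ℝ) (A B : Mat n) : ℝ :=
  Filter.limsup (fun p : Mat n × ℝ => (f (p.1 + p.2 • B) - f p.1) / p.2)
    ((𝓝[{X : Mat n | X.IsSymm}] A) ×ˢ (𝓝[>] (0 : ℝ)))

/-- The Clarke subdifferential `∂° f(A)`. -/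
noncomputable def clarkeSub {n : ℕ} (f : Mat n → ℝ) (A : Mat n) : Set (Mat n) :=
  {X | X.IsSymm ∧ ∀ H : Mat n, H.IsSymm → minner X H ≤ clarkeD f A H}

/-- The Michel-Penot directional derivative `f◇(A; B)`. -/
noncomputable def mpD {n : ℕ} (f : Mat n → ℝ) (A B : Mat n) : ℝ :=
  ⨆ X : {X : Mat n // X.IsSymm},
    Filter.limsup (fun t : ℝ => (f (A + t • X.1 + t • B) - f (A + t • X.1)) / t) (𝓝[>] (0 : ℝ))

/-- The Michel-Penot subdifferential `∂◇ f(A)`. -/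
noncomputable def mpSub {n : ℕ} (f : Mat n → ℝ) (A : Mat n) : Set (Mat n) :=
  {X | X.IsSymm ∧ ∀ H : Mat n, H.IsSymm → minner X H ≤ mpD f A H}

/-- `S_m(A)`: the set of normalised symplectic eigenvector pairs of `A` corresponding to the
symplectic eigenvalue `d_m(A)`. -/
noncomputable def SmSet {n : ℕ} (A : Mat n) (m : ℕ) :
    Set ((Fin n ⊕ Fin n → ℝ) × (Fin n ⊕ Fin n → ℝ)) :=
  {p | A *ᵥ p.1 = sEig A m • (symplJ n *ᵥ p.2) ∧
       A *ᵥ p.2 = (-sEig A m) • (symplJ n *ᵥ p.1) ∧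
       p.1 ⬝ᵥ (symplJ n *ᵥ p.2) = 1}

/-- The set `{ -(1/2)(xxᵀ + yyᵀ) : (x,y) ∈ S_m(A) }`. -/
noncomputable def gradSet {n : ℕ} (A : Mat n) (m : ℕ) : Set (Mat n) :=
  {X | ∃ p ∈ SmSet A m,
    X = (-(1 / 2) : ℝ) • (Matrix.vecMulVec p.1 p.1 + Matrix.vecMulVec p.2 p.2)}

/-- A symplectic eigenvector pair of `A` corresponding to some symplectic eigenvalue `d`. -/
noncomputable def EigPair {n : ℕ} (A : Mat n) (u v : Fin n ⊕ Fin n → ℝ) : Prop :=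
  (u ≠ 0 ∨ v ≠ 0) ∧ ∃ d : ℝ, (∃ i : Fin n, symplEig A i = d) ∧
    A *ᵥ u = d • (symplJ n *ᵥ v) ∧ A *ᵥ v = (-d) • (symplJ n *ᵥ u)

/-- The helper extending a finite matrix to a function on `ℕ × ℕ` (by zero). -/
def padFun {r i : ℕ} (U : Matrix (Fin r) (Fin i) ℝ) : ℕ → ℕ → ℝ :=
  fun a b => if h : a < r ∧ b < i then U ⟨a, h.1⟩ ⟨b, h.2⟩ else 0

/-- The set `Δ_m(A)` of structured `2n × 2m` matrices. -/
noncomputable def DeltaSet {n : ℕ} (A : Mat n) (m : ℕ) : Set (MatR n m) :=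
  {H | ∃ (U V : Matrix (Fin (iIdx A m + jIdx A m)) (Fin (iIdx A m)) ℝ),
    ((U.map (Complex.ofReal)) + Complex.I • (V.map (Complex.ofReal)))ᴴ *
      ((U.map (Complex.ofReal)) + Complex.I • (V.map (Complex.ofReal))) = 1 ∧
    ∀ (k : Fin n) (c : Fin m),
      (H (Sum.inl k) (Sum.inl c) =
        if (k : ℕ) < m - iIdx A m ∧ (c : ℕ) < m - iIdx A m then
          (if (k : ℕ) = (c : ℕ) then 1 else 0)
        else if (m - iIdx A m ≤ (k : ℕ) ∧ (k : ℕ) < m + jIdx A m) ∧ m - iIdx A m ≤ (c : ℕ) then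
          padFun U ((k : ℕ) - (m - iIdx A m)) ((c : ℕ) - (m - iIdx A m))
        else 0) ∧
      (H (Sum.inl k) (Sum.inr c) =
        if (m - iIdx A m ≤ (k : ℕ) ∧ (k : ℕ) < m + jIdx A m) ∧ m - iIdx A m ≤ (c : ℕ) then
          padFun V ((k : ℕ) - (m - iIdx A m)) ((c : ℕ) - (m - iIdx A m))
        else 0) ∧
      (H (Sum.inr k) (Sum.inl c) =
        if (m - iIdx A m ≤ (k : ℕ) ∧ (k : ℕ) < m + jIdx A m) ∧ m - iIdx A m ≤ (c : ℕ) then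
          -padFun V ((k : ℕ) - (m - iIdx A m)) ((c : ℕ) - (m - iIdx A m))
        else 0) ∧
      (H (Sum.inr k) (Sum.inr c) =
        if (k : ℕ) < m - iIdx A m ∧ (c : ℕ) < m - iIdx A m then
          (if (k : ℕ) = (c : ℕ) then 1 else 0)
        else if (m - iIdx A m ≤ (k : ℕ) ∧ (k : ℕ) < m + jIdx A m) ∧ m - iIdx A m ≤ (c : ℕ) then
          padFun U ((k : ℕ) - (m - iIdx A m)) ((c : ℕ) - (m - iIdx A m))
        else 0)}

/-- The operator norm (with respect to the Euclidean norm) of a `2n × 2n` real matrix. -/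
noncomputable def opN {n : ℕ} (A : Mat n) : ℝ :=
  ‖Matrix.toEuclideanCLM (𝕜 := ℝ) A‖

/-! If `(u, v)` is a column pair of `M`, then `uᵀAu = vᵀAv = d` and, because `Ju = -d⁻¹ A v`,
`(Ju)ᵀA⁻¹(Ju) = d⁻¹`, where `d` is the symplectic eigenvalue of the pair. Comparing the
quadratic forms of `A` and `A⁻¹` with the Euclidean one (via Cauchy–Schwarz for the form of a
positive definite matrix) gives `|u|² ≤ ‖A⁻¹‖ d` and `|u|² = |Ju|² ≤ ‖A‖ / d`, hence
`|u|⁴ ≤ κ(A)`, so `|u|² ≤ κ(A)` as `κ(A) ≥ 1`; the same holds for `v`. Summing over the `2n`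
columns gives the bound. -/

section QuadraticForms

variable {ι : Type*} [Fintype ι]

lemma dotProduct_mulVec_le_norm_toEuclideanCLM_mul [DecidableEq ι] (B : Matrix ι ι ℝ)
    (x : ι → ℝ) :
    x ⬝ᵥ B *ᵥ x ≤ ‖toEuclideanCLM (𝕜 := ℝ) B‖ * (x ⬝ᵥ x) := by
  set e : EuclideanSpace ℝ ι := WithLp.toLp 2 x
  have hnorm : x ⬝ᵥ x = ‖e‖ ^ 2 := by
    rw [← real_inner_self_eq_norm_sq, EuclideanSpace.inner_eq_star_dotProduct]
    simp [e]
  calc x ⬝ᵥ B *ᵥ x = inner ℝ e (toEuclideanCLM (𝕜 := ℝ) B e) :=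
        (inner_toEuclideanCLM B e e).symm
    _ ≤ ‖e‖ * ‖toEuclideanCLM (𝕜 := ℝ) B e‖ := real_inner_le_norm _ _
    _ ≤ ‖e‖ * (‖toEuclideanCLM (𝕜 := ℝ) B‖ * ‖e‖) := by
        gcongr; exact ContinuousLinearMap.le_opNorm _ e
    _ = ‖toEuclideanCLM (𝕜 := ℝ) B‖ * (x ⬝ᵥ x) := by rw [hnorm]; ring

lemma one_le_norm_toEuclideanCLM_mul_inv [DecidableEq ι] [Nonempty ι] {A : Matrix ι ι ℝ}
    (hA : IsUnit A.det) :
    1 ≤ ‖toEuclideanCLM (𝕜 := ℝ) A‖ * ‖toEuclideanCLM (𝕜 := ℝ) A⁻¹‖ :=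
  calc (1 : ℝ) = ‖toEuclideanCLM (𝕜 := ℝ) (A * A⁻¹)‖ := by
        rw [mul_nonsing_inv A hA, map_one, norm_one]
    _ ≤ _ := by rw [map_mul]; exact norm_mul_le _ _

lemma Matrix.PosSemidef.dotProduct_mulVec_sq_le {A : Matrix ι ι ℝ} (hA : A.PosSemidef)
    (x y : ι → ℝ) : (x ⬝ᵥ A *ᵥ y) ^ 2 ≤ (x ⬝ᵥ A *ᵥ x) * (y ⬝ᵥ A *ᵥ y) := by
  have hsymm : y ⬝ᵥ A *ᵥ x = x ⬝ᵥ A *ᵥ y := by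
    rw [← dotProduct_transpose_mulVec, ← conjTranspose_eq_transpose_of_trivial, hA.isHermitian.eq]
  have hquad : ∀ t : ℝ,
      0 ≤ (y ⬝ᵥ A *ᵥ y) * (t * t) + 2 * (x ⬝ᵥ A *ᵥ y) * t + x ⬝ᵥ A *ᵥ x := by
    intro t
    have := hA.dotProduct_mulVec_nonneg (x + t • y)
    simp only [star_trivial, mulVec_add, mulVec_smul, add_dotProduct, dotProduct_add,
      smul_dotProduct, dotProduct_smul, smul_eq_mul, hsymm] at this
    linarith
  have := discrim_le_zero hquad
  rw [discrim] at this
  nlinarith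

lemma Matrix.PosDef.dotProduct_self_le [DecidableEq ι] {A : Matrix ι ι ℝ} (hA : A.PosDef)
    (x : ι → ℝ) :
    x ⬝ᵥ x ≤ ‖toEuclideanCLM (𝕜 := ℝ) A⁻¹‖ * (x ⬝ᵥ A *ᵥ x) := by
  set y := A⁻¹ *ᵥ x
  have hAy : A *ᵥ y = x := by
    rw [mulVec_mulVec, mul_nonsing_inv A ((isUnit_iff_isUnit_det A).mp hA.isUnit), one_mulVec]
  have hxAx : 0 ≤ x ⬝ᵥ A *ᵥ x := hA.posSemidef.dotProduct_mulVec_nonneg x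
  -- Cauchy–Schwarz for the form of `A`, applied to `x` and `A⁻¹ x`
  have hcs : (x ⬝ᵥ x) ^ 2 ≤ (x ⬝ᵥ A *ᵥ x) * (‖toEuclideanCLM (𝕜 := ℝ) A⁻¹‖ * (x ⬝ᵥ x)) := by
    have h := hA.posSemidef.dotProduct_mulVec_sq_le x y
    rw [hAy, dotProduct_comm y x] at h
    exact h.trans (mul_le_mul_of_nonneg_left
      (dotProduct_mulVec_le_norm_toEuclideanCLM_mul _ x) hxAx)
  have hxx : 0 ≤ x ⬝ᵥ x := dotProduct_star_self_nonneg x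
  rcases hxx.eq_or_lt with hx0 | hxpos
  · rw [← hx0]
    exact mul_nonneg (norm_nonneg _) hxAx
  · exact le_of_mul_le_mul_right (by nlinarith) hxpos

end QuadraticForms

section Symplectic

variable {n : ℕ}

lemma symplJ_transpose : (symplJ n)ᵀ = -symplJ n := by
  simp [symplJ, fromBlocks_transpose, fromBlocks_neg]

lemma symplJ_transpose_mul_self : (symplJ n)ᵀ * symplJ n = 1 := by
  simp [symplJ, fromBlocks_transpose, fromBlocks_multiply, ← fromBlocks_one]

lemma dotProduct_symplJ_mulVec_comm (x y : Fin n ⊕ Fin n → ℝ) :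
    x ⬝ᵥ symplJ n *ᵥ y = -(y ⬝ᵥ symplJ n *ᵥ x) := by
  rw [← dotProduct_transpose_mulVec, symplJ_transpose, neg_mulVec, dotProduct_neg]

lemma symplJ_mulVec_dotProduct_self (x : Fin n ⊕ Fin n → ℝ) :
    symplJ n *ᵥ x ⬝ᵥ symplJ n *ᵥ x = x ⬝ᵥ x := by
  rw [← dotProduct_transpose_mulVec, mulVec_mulVec, symplJ_transpose_mul_self, one_mulVec]

lemma InSp.dotProduct_symplJ_mulVec {m : ℕ} {S : MatR n m} (hS : InSp n m S) (j : Fin m) :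
    (fun i => S i (Sum.inl j)) ⬝ᵥ symplJ n *ᵥ (fun i => S i (Sum.inr j)) = 1 := by
  show (Sᵀ * (symplJ n * S)) (Sum.inl j) (Sum.inr j) = 1
  rw [← Matrix.mul_assoc, hS]
  simp [symplJ]

end Symplectic

section SymplecticEigenvectors

variable {n : ℕ} {A : Mat n} {d : ℝ} {u v : Fin n ⊕ Fin n → ℝ}

lemma symplPair_fst_dotProduct_self_le (hA : A.PosDef)
    (hu : A *ᵥ u = d • (symplJ n *ᵥ v)) (hv : A *ᵥ v = (-d) • (symplJ n *ᵥ u))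
    (huv : u ⬝ᵥ symplJ n *ᵥ v = 1) :
    u ⬝ᵥ u ≤ opN A * opN A⁻¹ := by
  have hdet : IsUnit A.det := (isUnit_iff_isUnit_det A).mp hA.isUnit
  have hdu : u ⬝ᵥ A *ᵥ u = d := by rw [hu, dotProduct_smul, huv, smul_eq_mul, mul_one]
  have hvu : v ⬝ᵥ symplJ n *ᵥ u = -1 := by rw [dotProduct_symplJ_mulVec_comm, huv]
  have hu0 : u ≠ 0 := by rintro rfl; simp at huv
  have hd : 0 < d := hdu ▸ by simpa using hA.dotProduct_mulVec_pos hu0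
  have hJu : A⁻¹ *ᵥ symplJ n *ᵥ u = (-d⁻¹) • v := by
    rw [show symplJ n *ᵥ u = (-d⁻¹) • A *ᵥ v by
        rw [hv, smul_smul, neg_mul_neg, inv_mul_cancel₀ hd.ne', one_smul],
      mulVec_smul, mulVec_mulVec, nonsing_inv_mul A hdet, one_mulVec]
  have h₁ : u ⬝ᵥ u ≤ opN A⁻¹ * d := hdu ▸ hA.dotProduct_self_le u
  have h₂ : u ⬝ᵥ u ≤ opN A * d⁻¹ := by
    have h := hA.inv.dotProduct_self_le (symplJ n *ᵥ u)
    rwa [nonsing_inv_nonsing_inv A hdet, hJu, symplJ_mulVec_dotProduct_self, dotProduct_smul,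
      dotProduct_comm _ v, hvu, smul_eq_mul, neg_mul_neg, mul_one] at h
  have hκ : 1 ≤ opN A * opN A⁻¹ :=
    have : Nonempty (Fin n ⊕ Fin n) := ⟨(Function.ne_iff.mp hu0).choose⟩
    one_le_norm_toEuclideanCLM_mul_inv hdet
  have hu_nonneg : 0 ≤ u ⬝ᵥ u := dotProduct_star_self_nonneg u
  have hsq : (u ⬝ᵥ u) ^ 2 ≤ opN A * opN A⁻¹ :=
    calc (u ⬝ᵥ u) ^ 2 ≤ (opN A⁻¹ * d) * (opN A * d⁻¹) := by
          rw [sq]; exact mul_le_mul h₁ h₂ hu_nonneg (mul_nonneg (norm_nonneg _) hd.le)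
      _ = opN A * opN A⁻¹ := by field_simp
  nlinarith

lemma symplPair_snd_dotProduct_self_le (hA : A.PosDef)
    (hu : A *ᵥ u = d • (symplJ n *ᵥ v)) (hv : A *ᵥ v = (-d) • (symplJ n *ᵥ u))
    (huv : u ⬝ᵥ symplJ n *ᵥ v = 1) :
    v ⬝ᵥ v ≤ opN A * opN A⁻¹ :=
  symplPair_fst_dotProduct_self_le (d := d) (u := v) (v := -u) hA
    (by rw [hv, mulVec_neg, smul_neg, neg_smul])
    (by rw [mulVec_neg, hu, neg_smul])
    (by rw [mulVec_neg, dotProduct_neg, ← dotProduct_symplJ_mulVec_comm, huv])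

end SymplecticEigenvectors

theorem stmt18 {n : ℕ} (A : Mat n) (hA : A.PosDef) (M : Mat n) (hM : InSpA n n A M) :
    ∑ i, ∑ j, (M i j) ^ 2 ≤ (2 * n : ℝ) * (opN A * opN A⁻¹) := by
  obtain ⟨hSp, hEig⟩ := hM
  have hcol : ∀ c, (fun i => M i c) ⬝ᵥ (fun i => M i c) ≤ opN A * opN A⁻¹ := by
    rintro (j | j)
    · exact symplPair_fst_dotProduct_self_le hA (hEig j).1 (hEig j).2
        (hSp.dotProduct_symplJ_mulVec j)
    · exact symplPair_snd_dotProduct_self_le hA (hEig j).1 (hEig j).2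
        (hSp.dotProduct_symplJ_mulVec j)
  calc ∑ i, ∑ j, (M i j) ^ 2 = ∑ c, (fun i => M i c) ⬝ᵥ (fun i => M i c) := by
        rw [Finset.sum_comm]; simp only [dotProduct, sq]
    _ ≤ ∑ _c : Fin n ⊕ Fin n, opN A * opN A⁻¹ := Finset.sum_le_sum fun c _ => hcol c
    _ = (2 * n : ℝ) * (opN A * opN A⁻¹) := by
        rw [Finset.sum_const, Finset.card_univ, Fintype.card_sum, Fintype.card_fin, nsmul_eq_mul]
        push_cast; ring
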